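/- arXiv:1001.1853 — 5 statements merged into one kernel-verified Lean document; each statement's English description precedes it below -/
import Mathlib

section
/- Let 0 < q < 2, α > 0, β > 0, δ > 0 and set α₁ = α + δ. Define c = c(q,δ) = (exp(2qδ/(2−q)) − 1)^{(2−q)/(2q)}. If a square-summable sequence η satisfies ∑_{k≥1} (exp(α₁ k) k^β η_k)² ≤ (cL)², then ∑_{k≥1} |exp(α k) k^β η_k|^q ≤ L^q. -/
/-!
Write `exp (α k) k^β η_k = (exp (α₁ k) k^β η_k) · exp (-δ k)`. Hölder's inequality with
exponents `2` and `2q/(2-q)` bounds the `ℓ^q` sum by the `ℓ²` norm of the first factor times the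
`ℓ^(2q/(2-q))` norm of `exp (-δ k)`, whose `2q/(2-q)`-th power is the geometric series
`∑ exp (-2qδk/(2-q)) = (exp (2qδ/(2-q)) - 1)⁻¹`; the constant `c` is chosen to cancel it.
-/

open Real

theorem Real.holderTriple_two_of_lt_two {q : ℝ} (hq0 : 0 < q) (hq2 : q < 2) :
    HolderTriple 2 (2 * q / (2 - q)) q where
  inv_add_inv_eq_inv := by
    have : 2 - q ≠ 0 := by linarith
    field_simp
    ring
  left_pos := two_pos
  right_pos := div_pos (by positivity) (by linarith)

theorem tsum_abs_mul_rpow_le_of_lt_two {ι : Type*} {q : ℝ} (hq0 : 0 < q) (hq2 : q < 2)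
    {a b : ι → ℝ} (ha : Summable fun i => a i ^ 2)
    (hb : Summable fun i => |b i| ^ (2 * q / (2 - q))) :
    ∑' i, |a i * b i| ^ q ≤
      (∑' i, a i ^ 2) ^ (q / 2) * (∑' i, |b i| ^ (2 * q / (2 - q))) ^ ((2 - q) / 2) := by
  have hpqr := holderTriple_two_of_lt_two hq0 hq2
  have ha' : Summable fun i => |a i| ^ (2 : ℝ) := by simpa using ha
  have key := Lr_rpow_le_Lp_mul_Lq_tsum_of_nonneg hpqr (fun i => abs_nonneg (a i))
    (fun i => abs_nonneg (b i)) ha' hb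
  have hexp : q / (2 * q / (2 - q)) = (2 - q) / 2 := by field_simp
  simpa [abs_mul, hexp] using key

theorem hasSum_exp_neg_mul_succ {r : ℝ} (hr : 0 < r) :
    HasSum (fun k : ℕ => exp (-(r * (k + 1)))) (exp r - 1)⁻¹ := by
  have h1 : exp (-r) < 1 := exp_lt_one_iff.2 (neg_lt_zero.2 hr)
  have hterm (k : ℕ) : exp (-r) * exp (-r) ^ k = exp (-(r * (k + 1))) := by
    rw [← exp_nat_mul, ← exp_add]
    ring_nf
  have hsum : exp (-r) * (1 - exp (-r))⁻¹ = (exp r - 1)⁻¹ := by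
    have : exp r - 1 ≠ 0 := (sub_pos.2 (one_lt_exp_iff.2 hr)).ne'
    rw [exp_neg]
    field_simp
  simpa only [hterm, hsum] using
    (hasSum_geometric_of_lt_one (exp_pos _).le h1).mul_left (exp (-r))

theorem rpow_mul_sq_rpow_half_mul_inv_rpow {E L q : ℝ} (hE : 0 < E) (hL : 0 ≤ L) (hq : 0 < q) :
    ((E ^ ((2 - q) / (2 * q)) * L) ^ 2) ^ (q / 2) * E⁻¹ ^ ((2 - q) / 2) = L ^ q := by
  have htwo : ((2 : ℕ) : ℝ) * (q / 2) = q := by push_cast; ring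
  have hexp : (2 - q) / (2 * q) * q = (2 - q) / 2 := by field_simp
  rw [← rpow_natCast, ← rpow_mul (by positivity), htwo, mul_rpow (by positivity) hL,
    ← rpow_mul hE.le, hexp, inv_rpow hE.le, mul_right_comm, mul_inv_cancel₀ (by positivity),
    one_mul]

theorem analytic_class_embedding_general
    (q α β δ L : ℝ) (hq0 : 0 < q) (hq2 : q < 2)
    (hδ : 0 < δ) (hL : 0 < L)
    (c : ℝ) (hc : c = (Real.exp (2 * q * δ / (2 - q)) - 1) ^ ((2 - q) / (2 * q)))
    (η : ℕ → ℝ)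
    (hsq : Summable fun k : ℕ =>
      (Real.exp ((α + δ) * (k + 1)) * ((k : ℝ) + 1) ^ β * η (k + 1)) ^ 2)
    (hball : ∑' k : ℕ,
      (Real.exp ((α + δ) * (k + 1)) * ((k : ℝ) + 1) ^ β * η (k + 1)) ^ 2 ≤ (c * L) ^ 2) :
    ∑' k : ℕ, |Real.exp (α * (k + 1)) * ((k : ℝ) + 1) ^ β * η (k + 1)| ^ q ≤ L ^ q := by
  set r := 2 * q * δ / (2 - q)
  have hr : 0 < r := div_pos (by positivity) (by linarith)
  have hE : 0 < exp r - 1 := sub_pos.2 (one_lt_exp_iff.2 hr)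
  have hweight (k : ℕ) : |exp (-(δ * (k + 1)))| ^ (2 * q / (2 - q)) = exp (-(r * (k + 1))) := by
    rw [abs_of_pos (exp_pos _), ← exp_mul]
    congr 1
    ring
  have hweight_sum : HasSum (fun k : ℕ => |exp (-(δ * (k + 1)))| ^ (2 * q / (2 - q)))
      (exp r - 1)⁻¹ := by
    simpa only [hweight] using hasSum_exp_neg_mul_succ hr
  have hsplit (k : ℕ) : exp (α * (k + 1)) * ((k : ℝ) + 1) ^ β * η (k + 1) =
      exp ((α + δ) * (k + 1)) * ((k : ℝ) + 1) ^ β * η (k + 1) * exp (-(δ * (k + 1))) := by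
    rw [add_mul, exp_add, exp_neg]
    field_simp
  calc ∑' k : ℕ, |exp (α * (k + 1)) * ((k : ℝ) + 1) ^ β * η (k + 1)| ^ q
      = ∑' k : ℕ, |exp ((α + δ) * (k + 1)) * ((k : ℝ) + 1) ^ β * η (k + 1) *
          exp (-(δ * (k + 1)))| ^ q := by simp only [hsplit]
    _ ≤ (∑' k : ℕ, (exp ((α + δ) * (k + 1)) * ((k : ℝ) + 1) ^ β * η (k + 1)) ^ 2) ^ (q / 2) *
          (∑' k : ℕ, |exp (-(δ * (k + 1)))| ^ (2 * q / (2 - q))) ^ ((2 - q) / 2) :=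
        tsum_abs_mul_rpow_le_of_lt_two hq0 hq2 hsq hweight_sum.summable
    _ ≤ ((c * L) ^ 2) ^ (q / 2) * ((exp r - 1)⁻¹) ^ ((2 - q) / 2) := by
        rw [hweight_sum.tsum_eq]
        gcongr
    _ = L ^ q := hc ▸ rpow_mul_sq_rpow_half_mul_inv_rpow hE hL.le hq0

/-- Embedding of an `l²`-ellipsoid with larger analytic smoothness into the
`l^q`-body with smaller analytic smoothness, for `0 < q < 2`. -/
theorem analytic_class_embedding
    (q α β δ L : ℝ) (hq0 : 0 < q) (hq2 : q < 2) (hα : 0 < α) (hβ : 0 < β)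
    (hδ : 0 < δ) (hL : 0 < L)
    (c : ℝ) (hc : c = (Real.exp (2 * q * δ / (2 - q)) - 1) ^ ((2 - q) / (2 * q)))
    (η : ℕ → ℝ)
    (hη : Summable fun k => (η k) ^ 2)
    (hsq : Summable fun k : ℕ =>
      (Real.exp ((α + δ) * (k + 1)) * ((k : ℝ) + 1) ^ β * η (k + 1)) ^ 2)
    (hball : ∑' k : ℕ,
      (Real.exp ((α + δ) * (k + 1)) * ((k : ℝ) + 1) ^ β * η (k + 1)) ^ 2 ≤ (c * L) ^ 2) :
    ∑' k : ℕ, |Real.exp (α * (k + 1)) * ((k : ℝ) + 1) ^ β * η (k + 1)| ^ q ≤ L ^ q :=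
  analytic_class_embedding_general q α β δ L hq0 hq2 hδ hL c hc η hsq hball
end

section
/- Let {b_i} and {c_i} be positive sequences with b_i strictly increasing, b_i → ∞ and c_i b_i → ∞. For r > 0, let X be the set of nonnegative sequences x with ∑_i b_i c_i x_i ≤ 1 and ∑_i c_i x_i ≥ r. Define B_k = (∑_{i=1}^k c_i)/(∑_{i=1}^k b_i c_i) and C_k = 1/(∑_{i=1}^k b_i c_i). Suppose m ≥ 1 satisfies B_m ≤ r ≤ B_{m−1}. Then the infimum w(r) = inf_{x ∈ X} sup_i x_i satisfies C_m ≤ w(r) ≤ C_{m−1}. -/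
/-!
Write `S_k = ∑_{i ≤ k} b_i c_i`. The plateau `x_i = S_{m-1}⁻¹` for `i ≤ m - 1`, `x_i = 0` beyond,
saturates `∑ b_i c_i x_i ≤ 1`, and `r ≤ B_{m-1}` is exactly its second constraint; so
`w(r) ≤ S_{m-1}⁻¹`. Conversely, for feasible `x` with `w = sup_i x_i`, subtracting the first
constraint from `b_{m+1}` times the second gives
`b_{m+1} r - 1 ≤ ∑_i c_i (b_{m+1} - b_i) x_i ≤ w D` with `D = ∑_{i ≤ m} c_i (b_{m+1} - b_i) > 0`,
because the terms with `i > m` are nonpositive. Since `B_m ≤ r` gives `D ≤ S_m (b_{m+1} r - 1)`,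
we get `D ≤ w S_m D`, that is `S_m⁻¹ ≤ w`.
-/

open Filter Finset

theorem Finset.sum_Icc_one_eq_sum_range {M : Type*} [AddCommMonoid M] (f : ℕ → M) (n : ℕ) :
    ∑ i ∈ Icc 1 n, f i = ∑ i ∈ range n, f (i + 1) := by
  rw [← Ico_add_one_right_eq_Icc, sum_Ico_eq_sum_range]
  simp only [Nat.add_sub_cancel, add_comm]

theorem Summable.tsum_le_sum_of_nonpos {ι : Type*} {f : ι → ℝ} (hf : Summable f) (s : Finset ι)
    (hs : ∀ i ∉ s, f i ≤ 0) : ∑' i, f i ≤ ∑ i ∈ s, f i := by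
  simpa only [tsum_neg, sum_neg_distrib, neg_le_neg_iff] using
    hf.neg.sum_le_tsum s fun i hi => neg_nonneg.2 (hs i hi)

theorem bddAbove_range_of_mul_le_one {a y : ℕ → ℝ} (ha : Tendsto a atTop atTop)
    (hay : ∀ i, a i * y i ≤ 1) : BddAbove (Set.range y) := by
  refine IsBoundedUnder.bddAbove_range (isBoundedUnder_of_eventually_le (a := 1) ?_)
  filter_upwards [ha.eventually_ge_atTop 1] with i hi
  nlinarith [hay i]

theorem tsum_mul_ite_lt (f : ℕ → ℝ) (n : ℕ) (w : ℝ) :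
    ∑' i, f i * (if i < n then w else 0) = (∑ i ∈ range n, f i) * w := by
  rw [tsum_eq_sum (s := range n) fun i hi => by simp_all, sum_mul]
  exact sum_congr rfl fun i hi => by simp_all

/-- The constraints of the extremal problem, indexed from `0`: `y i`, `β i`, `γ i` stand for the
paper's `x_{i+1}`, `b_{i+1}`, `c_{i+1}`. -/
structure IsFeasible (β γ : ℕ → ℝ) (r : ℝ) (y : ℕ → ℝ) : Prop where
  nonneg : ∀ i, 0 ≤ y i
  summable : Summable fun i => β i * γ i * y i
  tsum_le_one : ∑' i, β i * γ i * y i ≤ 1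
  le_tsum : r ≤ ∑' i, γ i * y i

section

variable {β γ : ℕ → ℝ} {r : ℝ}

theorem isFeasible_ite (hβ : ∀ i, 0 ≤ β i) (hγ : ∀ i, 0 ≤ γ i) {n : ℕ}
    (hr : r ≤ (∑ i ∈ range n, γ i) / ∑ i ∈ range n, β i * γ i) :
    IsFeasible β γ r fun i => if i < n then (∑ i ∈ range n, β i * γ i)⁻¹ else 0 := by
  have hw : 0 ≤ (∑ i ∈ range n, β i * γ i)⁻¹ :=
    inv_nonneg.2 (sum_nonneg fun i _ => mul_nonneg (hβ i) (hγ i))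
  refine ⟨fun i => by split_ifs <;> simp [hw], ?_, ?_, ?_⟩
  · exact summable_of_ne_finset_zero (s := range n) fun i hi => by simp_all
  · rw [tsum_mul_ite_lt]
    exact mul_inv_le_one
  · rwa [tsum_mul_ite_lt, ← div_eq_mul_inv]

namespace IsFeasible

variable {y : ℕ → ℝ}

theorem mul_le_one (hy : IsFeasible β γ r y) (hβ : ∀ i, 0 ≤ β i) (hγ : ∀ i, 0 ≤ γ i) (i : ℕ) :
    β i * γ i * y i ≤ 1 :=
  (hy.summable.le_tsum i fun j _ => mul_nonneg (mul_nonneg (hβ j) (hγ j)) (hy.nonneg j)).trans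
    hy.tsum_le_one

theorem bddAbove (hy : IsFeasible β γ r y) (hβ : ∀ i, 0 ≤ β i) (hγ : ∀ i, 0 ≤ γ i)
    (hγβ : Tendsto (fun i => γ i * β i) atTop atTop) : BddAbove (Set.range y) :=
  bddAbove_range_of_mul_le_one hγβ fun i => by
    rw [mul_comm (γ i)]
    exact hy.mul_le_one hβ hγ i

theorem summable_mul (hy : IsFeasible β γ r y) (hβ : 0 < β 0) (hmono : Monotone β)
    (hγ : ∀ i, 0 ≤ γ i) : Summable fun i => γ i * y i := by
  refine (hy.summable.div_const (β 0)).of_nonneg_of_le (fun i => mul_nonneg (hγ i) (hy.nonneg i))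
    fun i => ?_
  rw [le_div_iff₀ hβ]
  nlinarith [hmono (Nat.zero_le i), mul_nonneg (hγ i) (hy.nonneg i)]

theorem mul_tsum_sub_tsum_le (hy : IsFeasible β γ r y) (hβ : 0 < β 0) (hmono : Monotone β)
    (hγ : ∀ i, 0 ≤ γ i) (m : ℕ) :
    β m * ∑' i, γ i * y i - ∑' i, β i * γ i * y i ≤
      ∑ i ∈ range m, (β m - β i) * (γ i * y i) := by
  have hsum := (hy.summable_mul hβ hmono hγ).mul_left (β m)
  rw [← tsum_mul_left, ← hsum.tsum_sub hy.summable]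
  refine ((hsum.sub hy.summable).tsum_le_sum_of_nonpos (range m) fun i hi => ?_).trans_eq
    (sum_congr rfl fun i _ => by ring)
  have : β m ≤ β i := hmono (by simpa using hi)
  nlinarith [mul_nonneg (hγ i) (hy.nonneg i)]

theorem mul_sub_one_le_iSup_mul (hy : IsFeasible β γ r y) (hβ : ∀ i, 0 < β i)
    (hγ : ∀ i, 0 < γ i) (hmono : StrictMono β) (hγβ : Tendsto (fun i => γ i * β i) atTop atTop)
    (m : ℕ) :
    β m * r - 1 ≤ (⨆ i, y i) * ∑ i ∈ range m, (β m - β i) * γ i := by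
  -- `c_i b_i → ∞` makes `y` bounded, so that `⨆` is not the junk value `0`.
  have hyw : ∀ i, y i ≤ ⨆ i, y i :=
    le_ciSup (hy.bddAbove (fun i => (hβ i).le) (fun i => (hγ i).le) hγβ)
  calc β m * r - 1 ≤ β m * ∑' i, γ i * y i - ∑' i, β i * γ i * y i := by
        gcongr
        exacts [(hβ m).le, hy.le_tsum, hy.tsum_le_one]
    _ ≤ ∑ i ∈ range m, (β m - β i) * (γ i * y i) :=
      hy.mul_tsum_sub_tsum_le (hβ 0) hmono.monotone (fun i => (hγ i).le) m
    _ ≤ ∑ i ∈ range m, (β m - β i) * (γ i * ⨆ i, y i) := by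
      refine sum_le_sum fun i hi => ?_
      have hβi : β i ≤ β m := (hmono (by simpa using hi)).le
      have hγi : 0 ≤ γ i := (hγ i).le
      gcongr
      exact hyw i
    _ = (⨆ i, y i) * ∑ i ∈ range m, (β m - β i) * γ i := by
      rw [mul_sum]
      exact sum_congr rfl fun i _ => by ring

theorem inv_sum_le_iSup (hy : IsFeasible β γ r y) (hβ : ∀ i, 0 < β i) (hγ : ∀ i, 0 < γ i)
    (hmono : StrictMono β) (hγβ : Tendsto (fun i => γ i * β i) atTop atTop) {m : ℕ} (hm : 1 ≤ m)
    (hBm : (∑ i ∈ range m, γ i) / (∑ i ∈ range m, β i * γ i) ≤ r) :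
    (∑ i ∈ range m, β i * γ i)⁻¹ ≤ ⨆ i, y i := by
  set S := ∑ i ∈ range m, β i * γ i
  set D := ∑ i ∈ range m, (β m - β i) * γ i
  have hS : 0 < S := sum_pos (fun i _ => mul_pos (hβ i) (hγ i)) (nonempty_range_iff.2 (by omega))
  have hD : 0 < D := sum_pos (fun i hi => mul_pos (sub_pos.2 (hmono (by simpa using hi))) (hγ i))
    (nonempty_range_iff.2 (by omega))
  have hDS : D ≤ S * (β m * r - 1) := by
    have hCS : ∑ i ∈ range m, γ i ≤ r * S := (div_le_iff₀ hS).1 hBm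
    have hD_eq : D = β m * ∑ i ∈ range m, γ i - S := by
      rw [mul_sum, ← sum_sub_distrib]
      exact sum_congr rfl fun i _ => by ring
    nlinarith [mul_le_mul_of_nonneg_left hCS (hβ m).le]
  rw [inv_le_iff_one_le_mul₀ hS]
  refine le_of_mul_le_mul_right ?_ hD
  calc 1 * D ≤ S * (β m * r - 1) := by rwa [one_mul]
    _ ≤ S * ((⨆ i, y i) * D) := by gcongr; exact hy.mul_sub_one_le_iSup_mul hβ hγ hmono hγβ m
    _ = (⨆ i, y i) * S * D := by ring

end IsFeasible

theorem sInf_iSup_image_isFeasible_mem_Icc (hβ : ∀ i, 0 < β i) (hγ : ∀ i, 0 < γ i)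
    (hmono : StrictMono β) (hγβ : Tendsto (fun i => γ i * β i) atTop atTop) {m : ℕ} (hm : 1 ≤ m)
    (hBm : (∑ i ∈ range m, γ i) / (∑ i ∈ range m, β i * γ i) ≤ r)
    (hBm1 : r ≤ (∑ i ∈ range (m - 1), γ i) / (∑ i ∈ range (m - 1), β i * γ i)) :
    sInf ((fun y => ⨆ i, y i) '' {y | IsFeasible β γ r y}) ∈
      Set.Icc (∑ i ∈ range m, β i * γ i)⁻¹ (∑ i ∈ range (m - 1), β i * γ i)⁻¹ := by
  have hwit := isFeasible_ite (fun i => (hβ i).le) (fun i => (hγ i).le) hBm1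
  constructor
  · refine le_csInf ⟨_, _, hwit, rfl⟩ ?_
    rintro _ ⟨y, hy, rfl⟩
    exact hy.inv_sum_le_iSup hβ hγ hmono hγβ hm hBm
  · have hbdd : BddBelow ((fun y => ⨆ i, y i) '' {y | IsFeasible β γ r y}) := by
      refine ⟨0, ?_⟩
      rintro _ ⟨y, hy, rfl⟩
      exact Real.iSup_nonneg hy.nonneg
    refine (csInf_le hbdd ⟨_, hwit, rfl⟩).trans (ciSup_le fun i => ?_)
    dsimp only
    split_ifs
    exacts [le_rfl, inv_nonneg.2 (sum_nonneg fun i _ => (mul_pos (hβ i) (hγ i)).le)]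

end

theorem image_iSup_succ_eq_image_iSup_isFeasible (b c : ℕ → ℝ) (r : ℝ) :
    (fun x : ℕ → ℝ => ⨆ i : ℕ, x (i + 1)) '' {x | (∀ i, 0 ≤ x i) ∧
        (Summable fun i : ℕ => b (i + 1) * c (i + 1) * x (i + 1)) ∧
        (∑' i : ℕ, b (i + 1) * c (i + 1) * x (i + 1)) ≤ 1 ∧
        r ≤ ∑' i : ℕ, c (i + 1) * x (i + 1)} =
      (fun y => ⨆ i, y i) '' {y | IsFeasible (fun i => b (i + 1)) (fun i => c (i + 1)) r y} := by
  ext v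
  constructor
  · rintro ⟨x, ⟨hx, hsum, hle, hge⟩, rfl⟩
    exact ⟨fun i => x (i + 1), ⟨fun i => hx _, hsum, hle, hge⟩, rfl⟩
  · rintro ⟨y, ⟨hy, hsum, hle, hge⟩, rfl⟩
    exact ⟨fun i => y (i - 1), ⟨fun i => hy _, by simpa using hsum, by simpa using hle,
      by simpa using hge⟩, by simp⟩

open Filter in
theorem extreme_sup_problem_bounds_general
    (b c : ℕ → ℝ)
    (hb : ∀ i, 1 ≤ i → 0 < b i) (hc : ∀ i, 1 ≤ i → 0 < c i)
    (hbmono : StrictMonoOn b {i : ℕ | 1 ≤ i})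
    (hcb : Tendsto (fun i => c i * b i) atTop atTop)
    (r : ℝ)
    (X : Set (ℕ → ℝ))
    (hX : X = {x | (∀ i, 0 ≤ x i) ∧
        (Summable fun i : ℕ => b (i + 1) * c (i + 1) * x (i + 1)) ∧
        (∑' i : ℕ, b (i + 1) * c (i + 1) * x (i + 1)) ≤ 1 ∧
        r ≤ ∑' i : ℕ, c (i + 1) * x (i + 1)})
    (m : ℕ) (hm : 1 ≤ m)
    (hBm : (∑ i ∈ Finset.Icc 1 m, c i) / (∑ i ∈ Finset.Icc 1 m, b i * c i) ≤ r)
    (hBm1 : r ≤ (∑ i ∈ Finset.Icc 1 (m - 1), c i) / (∑ i ∈ Finset.Icc 1 (m - 1), b i * c i)) :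
    (∑ i ∈ Finset.Icc 1 m, b i * c i)⁻¹ ≤ sInf ((fun x => ⨆ i : ℕ, x (i + 1)) '' X) ∧
    sInf ((fun x => ⨆ i : ℕ, x (i + 1)) '' X) ≤ (∑ i ∈ Finset.Icc 1 (m - 1), b i * c i)⁻¹ := by
  subst hX
  simp only [sum_Icc_one_eq_sum_range] at hBm hBm1 ⊢
  rw [image_iSup_succ_eq_image_iSup_isFeasible]
  exact sInf_iSup_image_isFeasible_mem_Icc (β := fun i => b (i + 1)) (γ := fun i => c (i + 1))
    (fun i => hb _ i.succ_pos) (fun i => hc _ i.succ_pos)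
    (fun i j hij => hbmono (Nat.le_add_left 1 i) (Nat.le_add_left 1 j) (by omega))
    ((tendsto_add_atTop_iff_nat 1).2 hcb) hm hBm hBm1

open Filter in
/-- Bounds for the value `w(r) = inf_{x ∈ X} sup_i x_i` of the extremal
problem over nonnegative sequences `x` with `∑ b_i c_i x_i ≤ 1` and
`∑ c_i x_i ≥ r`: if `B_m ≤ r ≤ B_{m−1}` then `C_m ≤ w(r) ≤ C_{m−1}`. -/
theorem extreme_sup_problem_bounds
    (b c : ℕ → ℝ)
    (hb : ∀ i, 1 ≤ i → 0 < b i) (hc : ∀ i, 1 ≤ i → 0 < c i)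
    (hbmono : StrictMonoOn b {i : ℕ | 1 ≤ i})
    (hbtop : Tendsto b atTop atTop)
    (hcb : Tendsto (fun i => c i * b i) atTop atTop)
    (r : ℝ) (hr : 0 < r)
    (X : Set (ℕ → ℝ))
    (hX : X = {x | (∀ i, 0 ≤ x i) ∧
        (Summable fun i : ℕ => b (i + 1) * c (i + 1) * x (i + 1)) ∧
        (∑' i : ℕ, b (i + 1) * c (i + 1) * x (i + 1)) ≤ 1 ∧
        r ≤ ∑' i : ℕ, c (i + 1) * x (i + 1)})
    (m : ℕ) (hm : 1 ≤ m)
    (hBm : (∑ i ∈ Finset.Icc 1 m, c i) / (∑ i ∈ Finset.Icc 1 m, b i * c i) ≤ r)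
    (hBm1 : r ≤ (∑ i ∈ Finset.Icc 1 (m - 1), c i) / (∑ i ∈ Finset.Icc 1 (m - 1), b i * c i)) :
    (∑ i ∈ Finset.Icc 1 m, b i * c i)⁻¹ ≤ sInf ((fun x => ⨆ i : ℕ, x (i + 1)) '' X) ∧
    sInf ((fun x => ⨆ i : ℕ, x (i + 1)) '' X) ≤ (∑ i ∈ Finset.Icc 1 (m - 1), b i * c i)⁻¹ :=
  extreme_sup_problem_bounds_general b c hb hc hbmono hcb r X hX m hm hBm hBm1
end

section
/- Let {a_k}_{k≥1} and {σ_k}_{k≥1} be positive increasing sequences, let r > 0, B > 1, and m ∈ ℕ satisfy r · a_{m+1} ≥ B. Then for every square-summable sequence η with ∑_{k≥1} a_k² σ_k² η_k² ≤ 1 and ∑_{k≥1} σ_k² η_k² ≥ r², one has ∑_{k=1}^m η_k² ≥ (1 − B^{−2}) r² / σ_m². -/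
/-! Split `∑ σ_k² η_k²` at `m`. On the tail `a_k ≥ a_{m+1}`, so the tail is at most
`a_{m+1}⁻² ∑ a_k² σ_k² η_k² ≤ a_{m+1}⁻² ≤ B⁻² r²`; the first `m` terms therefore carry at least
`(1 - B⁻²) r²`, and there `σ_k ≤ σ_m`. -/

open Finset

theorem tsum_le_sum_range_add_tsum_mul_div {w f : ℕ → ℝ} (m : ℕ) (hw : Monotone w)
    (hw0 : ∀ k, 0 ≤ w k) (hwm : 0 < w m) (hf : ∀ k, 0 ≤ f k) (hfs : Summable f)
    (hwfs : Summable fun k => w k * f k) :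
    ∑' k, f k ≤ ∑ k ∈ range m, f k + (∑' k, w k * f k) / w m := by
  have tail_le : ∑' k, f (k + m) ≤ (∑' k, w (k + m) * f (k + m)) / w m := by
    rw [le_div_iff₀ hwm, ← tsum_mul_right]
    refine ((hfs.comp_injective (add_left_injective m)).mul_right _).tsum_le_tsum (fun k => ?_)
      (hwfs.comp_injective (add_left_injective m))
    rw [mul_comm]
    exact mul_le_mul_of_nonneg_right (hw (Nat.le_add_left m k)) (hf _)
  have tail_le_tsum : ∑' k, w (k + m) * f (k + m) ≤ ∑' k, w k * f k := by
    rw [← hwfs.sum_add_tsum_nat_add m]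
    exact le_add_of_nonneg_left (sum_nonneg fun k _ => mul_nonneg (hw0 k) (hf k))
  rw [← hfs.sum_add_tsum_nat_add m]
  exact add_le_add_right (tail_le.trans (div_le_div_of_nonneg_right tail_le_tsum hwm.le)) _

theorem lower_bound_partial_sum_general
    (a σ : ℕ → ℝ)
    (hapos : ∀ k, 1 ≤ k → 0 < a k) (hσpos : ∀ k, 1 ≤ k → 0 < σ k)
    (hamono : ∀ k, 1 ≤ k → a k ≤ a (k + 1))
    (hσmono : ∀ k, 1 ≤ k → σ k ≤ σ (k + 1))
    (r B : ℝ) (hB : 1 < B)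
    (m : ℕ) (hra : B ≤ r * a (m + 1))
    (η : ℕ → ℝ)
    (hsum : Summable fun k : ℕ => a (k + 1) ^ 2 * σ (k + 1) ^ 2 * η (k + 1) ^ 2)
    (hsum2 : Summable fun k : ℕ => σ (k + 1) ^ 2 * η (k + 1) ^ 2)
    (hell : ∑' k : ℕ, a (k + 1) ^ 2 * σ (k + 1) ^ 2 * η (k + 1) ^ 2 ≤ 1)
    (hball : r ^ 2 ≤ ∑' k : ℕ, σ (k + 1) ^ 2 * η (k + 1) ^ 2) :
    (1 - B⁻¹ ^ 2) * r ^ 2 / σ m ^ 2 ≤ ∑ k ∈ Finset.Icc 1 m, η k ^ 2 := by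
  set f : ℕ → ℝ := fun k => σ (k + 1) ^ 2 * η (k + 1) ^ 2
  have ha : 0 < a (m + 1) := hapos _ m.succ_pos
  have hw : Monotone fun k => a (k + 1) ^ 2 := monotone_nat_of_le_succ fun k =>
    pow_le_pow_left₀ (hapos _ k.succ_pos).le (hamono _ k.succ_pos) 2
  have hwf : (fun k => a (k + 1) ^ 2 * f k) =
      fun k => a (k + 1) ^ 2 * σ (k + 1) ^ 2 * η (k + 1) ^ 2 :=
    funext fun k => (mul_assoc _ _ _).symm
  have split := tsum_le_sum_range_add_tsum_mul_div m hw (fun k => sq_nonneg _) (by positivity)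
    (fun k => by positivity) hsum2 (hwf ▸ hsum)
  rw [hwf] at split
  have tail : 1 / a (m + 1) ^ 2 ≤ B⁻¹ ^ 2 * r ^ 2 := by
    have hB0 : 0 < B := by linarith
    have hBa : B / a (m + 1) ≤ r := (div_le_iff₀ ha).2 hra
    calc 1 / a (m + 1) ^ 2 = B⁻¹ ^ 2 * (B / a (m + 1)) ^ 2 := by field_simp
      _ ≤ B⁻¹ ^ 2 * r ^ 2 := by gcongr
  have head : ∑ k ∈ range m, f k ≤ σ m ^ 2 * ∑ k ∈ Icc 1 m, η k ^ 2 := by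
    have hσ : MonotoneOn σ (Set.Ici 1) := monotoneOn_nat_Ici_of_le_succ hσmono
    rw [range_eq_Ico, sum_Ico_add' (fun k => σ k ^ 2 * η k ^ 2), zero_add,
      Ico_add_one_right_eq_Icc, mul_sum]
    refine sum_le_sum fun k hk => ?_
    obtain ⟨h1k, hkm⟩ := mem_Icc.1 hk
    have hσk : σ k ≤ σ m := hσ (Set.mem_Ici.2 h1k) (Set.mem_Ici.2 (h1k.trans hkm)) hkm
    exact mul_le_mul_of_nonneg_right (pow_le_pow_left₀ (hσpos k h1k).le hσk 2) (sq_nonneg _)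
  refine div_le_of_le_mul₀ (sq_nonneg _) (sum_nonneg fun k _ => sq_nonneg _) ?_
  linarith [div_le_div_of_nonneg_right hell (sq_nonneg (a (m + 1)))]

/-- Key estimate of Proposition 1: if `r·a_{m+1} ≥ B > 1` then any `η` in the
alternative set satisfies `∑_{k=1}^m η_k² ≥ (1 − B⁻²) r² / σ_m²`. -/
theorem lower_bound_partial_sum
    (a σ : ℕ → ℝ)
    (hapos : ∀ k, 1 ≤ k → 0 < a k) (hσpos : ∀ k, 1 ≤ k → 0 < σ k)
    (hamono : ∀ k, 1 ≤ k → a k ≤ a (k + 1))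
    (hσmono : ∀ k, 1 ≤ k → σ k ≤ σ (k + 1))
    (r B : ℝ) (hr : 0 < r) (hB : 1 < B)
    (m : ℕ) (hm : 1 ≤ m) (hra : B ≤ r * a (m + 1))
    (η : ℕ → ℝ)
    (hsum : Summable fun k : ℕ => a (k + 1) ^ 2 * σ (k + 1) ^ 2 * η (k + 1) ^ 2)
    (hsum2 : Summable fun k : ℕ => σ (k + 1) ^ 2 * η (k + 1) ^ 2)
    (hell : ∑' k : ℕ, a (k + 1) ^ 2 * σ (k + 1) ^ 2 * η (k + 1) ^ 2 ≤ 1)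
    (hball : r ^ 2 ≤ ∑' k : ℕ, σ (k + 1) ^ 2 * η (k + 1) ^ 2) :
    (1 - B⁻¹ ^ 2) * r ^ 2 / σ m ^ 2 ≤ ∑ k ∈ Finset.Icc 1 m, η k ^ 2 :=
  lower_bound_partial_sum_general a σ hapos hσpos hamono hσmono r B hB m hra η hsum hsum2 hell hball
end

section
/- Let α > 0, β > 0. Then the sums J₀(m) = ∑_{k=1}^m exp(4βk)(1 − (k/m)^{2α})² satisfy J₀(m) ≍ exp(4βm)/m² as m → ∞, i.e., there exist constants 0 < C₁ ≤ C₂ < ∞ and m₀ such that C₁ exp(4βm)/m² ≤ J₀(m) ≤ C₂ exp(4βm)/m² for all m ≥ m₀. -/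
/-!
Write `l = m - k`. Since `1 - x ^ p` is comparable to `1 - x` on `[0, 1]`, the `k`-th term of
`J₀(m)` is comparable to `exp (4βm) · e^{-4βl} l² / m²`. The term `l = 1` gives the lower bound;
`l² e^{-4βl} ≤ e^{-2βl} / β²` and a geometric series give the upper bound.
-/

open Real Finset

/-- The paper's `J₀(m)` is `J0 (2 * α) β m`. -/
noncomputable def J0 (p β : ℝ) (m : ℕ) : ℝ :=
  ∑ k ∈ Icc 1 m, exp (4 * β * k) * (1 - ((k : ℝ) / m) ^ p) ^ 2

section RpowBounds

variable {p x : ℝ}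

lemma one_sub_rpow_le_max_mul (hp : 0 ≤ p) (hx0 : 0 ≤ x) (hx1 : x ≤ 1) :
    1 - x ^ p ≤ max p 1 * (1 - x) := by
  rcases le_total p 1 with hp1 | hp1
  · have := rpow_le_rpow_of_exponent_ge' hx0 hx1 hp hp1
    rw [rpow_one] at this
    rw [max_eq_right hp1]
    linarith
  · have := one_add_mul_self_le_rpow_one_add (s := x - 1) (by linarith) hp1
    rw [add_sub_cancel] at this
    rw [max_eq_left hp1]
    linarith

lemma min_mul_le_one_sub_rpow (hp : 0 < p) (hx0 : 0 ≤ x) (hx1 : x ≤ 1) :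
    min p 1 * (1 - x) ≤ 1 - x ^ p := by
  rcases le_total p 1 with hp1 | hp1
  · have := rpow_one_add_le_one_add_mul_self (s := x - 1) (by linarith) hp.le hp1
    rw [add_sub_cancel] at this
    rw [min_eq_left hp1]
    linarith
  · have := rpow_le_rpow_of_exponent_ge' hx0 hx1 zero_le_one hp1
    rw [rpow_one] at this
    rw [min_eq_right hp1]
    linarith

end RpowBounds

lemma sq_le_exp_two_mul {x : ℝ} (hx : 0 ≤ x) : x ^ 2 ≤ exp (2 * x) := by
  rw [mul_comm, exp_mul, rpow_two]
  gcongr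
  linarith [add_one_le_exp x]

lemma sum_Icc_pow_sub_le {r : ℝ} (hr0 : 0 ≤ r) (hr1 : r < 1) (m : ℕ) :
    ∑ k ∈ Icc 1 m, r ^ (m - k) ≤ (1 - r)⁻¹ := calc
  _ ≤ ∑ k ∈ range (m + 1), r ^ (m - k) :=
    sum_le_sum_of_subset_of_nonneg (fun k hk => by simp at hk ⊢; omega) fun _ _ _ => by positivity
  _ = ∑ k ∈ range (m + 1), r ^ k := by simpa using sum_range_reflect (r ^ ·) (m + 1)
  _ ≤ (1 - r)⁻¹ := by
    have := geom_sum_Ico_le_of_lt_one (m := 0) (n := m + 1) hr0 hr1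
    rwa [← range_eq_Ico, pow_zero, ← inv_eq_one_div] at this

section J0

variable {p : ℝ} (β : ℝ) {m : ℕ}

lemma exp_mul_one_sub_rpow_sq_le (hp : 0 < p) (hβ : 0 < β) (hm : 0 < m) {k : ℕ} (hkm : k ≤ m) :
    exp (4 * β * k) * (1 - ((k : ℝ) / m) ^ p) ^ 2 ≤
      max p 1 ^ 2 / β ^ 2 * exp (4 * β * m) / m ^ 2 * exp (-(2 * β)) ^ (m - k) := by
  have hm' : (0 : ℝ) < m := by exact_mod_cast hm
  set l : ℝ := ((m - k : ℕ) : ℝ)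
  have hl : l = m - k := Nat.cast_sub hkm
  have hx0 : 0 ≤ (k : ℝ) / m := by positivity
  have hx1 : (k : ℝ) / m ≤ 1 := div_le_one_of_le₀ (by exact_mod_cast hkm) hm'.le
  have hupper : 1 - ((k : ℝ) / m) ^ p ≤ max p 1 * (l / m) := by
    have := one_sub_rpow_le_max_mul hp.le hx0 hx1
    rwa [one_sub_div hm'.ne', ← hl] at this
  have hnonneg : 0 ≤ 1 - ((k : ℝ) / m) ^ p := sub_nonneg.2 (rpow_le_one hx0 hx1 hp.le)
  have hexp :
      exp (4 * β * k) = exp (4 * β * m) * exp (-(2 * β)) ^ (m - k) * exp (-(2 * β * l)) := by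
    rw [← exp_nat_mul, ← exp_add, ← exp_add, hl, Nat.cast_sub hkm]
    ring_nf
  calc exp (4 * β * k) * (1 - ((k : ℝ) / m) ^ p) ^ 2
      ≤ exp (4 * β * k) * (max p 1 * (l / m)) ^ 2 := by gcongr
    _ = max p 1 ^ 2 / β ^ 2 * exp (4 * β * m) / m ^ 2 * exp (-(2 * β)) ^ (m - k) *
          (exp (-(2 * β * l)) * (β * l) ^ 2) := by
      rw [hexp]; field_simp
    _ ≤ max p 1 ^ 2 / β ^ 2 * exp (4 * β * m) / m ^ 2 * exp (-(2 * β)) ^ (m - k) *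
          (exp (-(2 * β * l)) * exp (2 * (β * l))) := by
      gcongr
      exact sq_le_exp_two_mul (by positivity)
    _ = _ := by rw [← exp_add]; ring_nf; simp

lemma J0_le (hp : 0 < p) (hβ : 0 < β) (hm : 0 < m) :
    J0 p β m ≤ max p 1 ^ 2 / β ^ 2 * (1 - exp (-(2 * β)))⁻¹ * exp (4 * β * m) / m ^ 2 := calc
  J0 p β m ≤ ∑ k ∈ Icc 1 m,
      max p 1 ^ 2 / β ^ 2 * exp (4 * β * m) / m ^ 2 * exp (-(2 * β)) ^ (m - k) :=
    sum_le_sum fun k hk => exp_mul_one_sub_rpow_sq_le β hp hβ hm (mem_Icc.1 hk).2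
  _ ≤ max p 1 ^ 2 / β ^ 2 * exp (4 * β * m) / m ^ 2 * (1 - exp (-(2 * β)))⁻¹ := by
    rw [← mul_sum]
    gcongr
    exact sum_Icc_pow_sub_le (exp_pos _).le (exp_lt_one_iff.2 (by linarith)) m
  _ = _ := by ring

lemma le_J0 (hp : 0 < p) (hm : 2 ≤ m) :
    min p 1 ^ 2 * exp (-(4 * β)) * exp (4 * β * m) / m ^ 2 ≤ J0 p β m := by
  have hterm := single_le_sum (f := fun k : ℕ => exp (4 * β * k) * (1 - ((k : ℝ) / m) ^ p) ^ 2)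
    (fun _ _ => by positivity) (mem_Icc.2 ⟨by omega, by omega⟩ : m - 1 ∈ Icc 1 m)
  rw [Nat.cast_sub (by omega), Nat.cast_one] at hterm
  refine le_trans ?_ hterm
  have hlower := min_mul_le_one_sub_rpow hp (x := (m - 1) / m) (by bound) (by bound)
  rw [one_sub_div (by positivity), sub_sub_cancel] at hlower
  calc min p 1 ^ 2 * exp (-(4 * β)) * exp (4 * β * m) / m ^ 2
      = exp (4 * β * (m - 1)) * (min p 1 * (1 / m)) ^ 2 := by
        rw [mul_sub, mul_one, sub_eq_neg_add, exp_add]; ring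
    _ ≤ _ := by gcongr

end J0

/-- In the severely ill-posed Sobolev case,
`J₀(m) = ∑_{k=1}^m exp(4βk)(1 − (k/m)^{2α})² ≍ exp(4βm)/m²`. -/
theorem J0_order_of_magnitude (α β : ℝ) (hα : 0 < α) (hβ : 0 < β) :
    ∃ C₁ C₂ : ℝ, ∃ m₀ : ℕ, 0 < C₁ ∧ C₁ ≤ C₂ ∧ ∀ m : ℕ, m₀ ≤ m →
      C₁ * Real.exp (4 * β * m) / (m : ℝ) ^ 2 ≤
        (∑ k ∈ Finset.Icc 1 m, Real.exp (4 * β * k) * (1 - ((k : ℝ) / m) ^ (2 * α)) ^ 2) ∧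
      (∑ k ∈ Finset.Icc 1 m, Real.exp (4 * β * k) * (1 - ((k : ℝ) / m) ^ (2 * α)) ^ 2) ≤
        C₂ * Real.exp (4 * β * m) / (m : ℝ) ^ 2 := by
  have hp : 0 < 2 * α := by positivity
  set C₁ := min (2 * α) 1 ^ 2 * exp (-(4 * β))
  set C₂ := max (2 * α) 1 ^ 2 / β ^ 2 * (1 - exp (-(2 * β)))⁻¹
  refine ⟨C₁, max C₁ C₂, 2, by positivity, le_max_left _ _, fun m hm => ⟨le_J0 β hp hm, ?_⟩⟩
  refine (J0_le β hp hβ (by omega)).trans ?_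
  gcongr
  exact le_max_right _ _
end

section
/- Let T_ε → ∞ and define T_{ε,k} = max(T_ε, √(2(log k + log log k))) for k ≥ 2. Then ∑_{k≥2} Φ(−T_{ε,k}) → 0 as ε → 0, where Φ is the standard normal CDF. -/
open Filter in
/-- The standard Gaussian cumulative distribution function `Φ`. -/
noncomputable def stdGaussianCDF (x : ℝ) : ℝ :=
  ProbabilityTheory.cdf (ProbabilityTheory.gaussianReal 0 1) x

/-!
Dominated convergence over `k`. Each term is at most `Φ(-T_ε) → 0`, and is dominated by
`Φ(-s_k)` with `s_k = √(2(log k + log log k))`. The Gaussian tail bound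
`Φ(-s) ≤ e^{-s²/2} / (s√(2π))`, obtained by inserting the factor `-t/s ≥ 1` under the integral
over `(-∞, -s]`, gives `Φ(-s_k) ≤ 1 / (√(2π) k (log k)^{3/2})`, a convergent Bertrand series.
-/

open Filter MeasureTheory ProbabilityTheory Real Set Topology

lemma stdGaussianCDF_nonneg (x : ℝ) : 0 ≤ stdGaussianCDF x := cdf_nonneg _ x

lemma monotone_stdGaussianCDF : Monotone stdGaussianCDF := monotone_cdf _

lemma tendsto_stdGaussianCDF_atBot : Tendsto stdGaussianCDF atBot (𝓝 0) := tendsto_cdf_atBot _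

lemma hasDerivAt_exp_neg_sq_div_two (x : ℝ) :
    HasDerivAt (fun y => exp (-y ^ 2 / 2)) (-x * exp (-x ^ 2 / 2)) x := by
  have h : HasDerivAt (fun y : ℝ => -y ^ 2 / 2) (-x) x := by
    refine ((hasDerivAt_pow 2 x).neg.div_const 2).congr_deriv ?_
    ring
  simpa [mul_comm] using h.exp

lemma integrable_mul_exp_neg_sq_div_two : Integrable fun x : ℝ => x * exp (-x ^ 2 / 2) :=
  (integrable_mul_exp_neg_mul_sq (by norm_num : (0 : ℝ) < 1 / 2)).congr
    (.of_forall fun x => by simp only; congr 2; ring)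

lemma tendsto_exp_neg_sq_div_two_atBot : Tendsto (fun y : ℝ => exp (-y ^ 2 / 2)) atBot (𝓝 0) := by
  have h : Tendsto (fun y : ℝ => y ^ 2 / 2) atBot atTop :=
    ((tendsto_pow_atTop two_ne_zero).comp tendsto_neg_atBot_atTop).atTop_div_const two_pos
      |>.congr fun y => by simp
  exact tendsto_exp_atBot.comp (tendsto_neg_atTop_atBot.comp h) |>.congr fun y => by simp [neg_div]

lemma integral_Iic_neg_mul_exp_neg_sq_div_two (a : ℝ) :
    ∫ x in Iic a, -x * exp (-x ^ 2 / 2) = exp (-a ^ 2 / 2) := by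
  simpa using integral_Iic_of_hasDerivAt_of_tendsto' (fun x _ => hasDerivAt_exp_neg_sq_div_two x)
    (integrable_mul_exp_neg_sq_div_two.neg.integrableOn.congr_fun (fun x _ => by simp)
      measurableSet_Iic) tendsto_exp_neg_sq_div_two_atBot

lemma stdGaussianCDF_eq_integral (x : ℝ) :
    stdGaussianCDF x = (√(2 * π))⁻¹ * ∫ t in Iic x, exp (-t ^ 2 / 2) := by
  rw [stdGaussianCDF, cdf_eq_real, measureReal_def, gaussianReal_apply_eq_integral 0 one_ne_zero,
    ENNReal.toReal_ofReal (setIntegral_nonneg measurableSet_Iic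
      fun t _ => gaussianPDFReal_nonneg 0 1 t), ← integral_const_mul]
  simp [gaussianPDFReal]

lemma integral_Iic_exp_neg_sq_div_two_le {s : ℝ} (hs : 0 < s) :
    ∫ t in Iic (-s), exp (-t ^ 2 / 2) ≤ exp (-s ^ 2 / 2) / s := by
  have hint : Integrable fun t : ℝ => exp (-t ^ 2 / 2) :=
    (integrable_exp_neg_mul_sq (by norm_num : (0 : ℝ) < 1 / 2)).congr
      (.of_forall fun t => by simp only; congr 1; ring)
  calc ∫ t in Iic (-s), exp (-t ^ 2 / 2)
      ≤ ∫ t in Iic (-s), -t / s * exp (-t ^ 2 / 2) := by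
        refine setIntegral_mono_on hint.integrableOn
          ((integrable_mul_exp_neg_sq_div_two.neg.div_const s).integrableOn.congr_fun
            (fun t _ => by simp only [Pi.neg_apply]; ring) measurableSet_Iic)
          measurableSet_Iic fun t ht => ?_
        exact le_mul_of_one_le_left (exp_nonneg _)
          ((one_le_div hs).2 (by linarith [mem_Iic.1 ht]))
    _ = exp (-s ^ 2 / 2) / s := by
        simp_rw [div_mul_eq_mul_div, integral_div, integral_Iic_neg_mul_exp_neg_sq_div_two, neg_sq]

theorem stdGaussianCDF_neg_le {s : ℝ} (hs : 0 < s) :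
    stdGaussianCDF (-s) ≤ exp (-s ^ 2 / 2) / (s * √(2 * π)) := by
  rw [stdGaussianCDF_eq_integral, mul_comm s, ← div_div, div_eq_inv_mul _ √(2 * π), mul_div_assoc]
  exact mul_le_mul_of_nonneg_left (integral_Iic_exp_neg_sq_div_two_le hs) (by positivity)

theorem Real.summable_inv_nat_mul_log_rpow {p : ℝ} (hp : 1 < p) :
    Summable fun n : ℕ => ((n : ℝ) * log n ^ p)⁻¹ := by
  have hlog2 : 0 < log 2 := log_pos one_lt_two
  rw [← summable_condensed_iff_of_eventually_nonneg
    (.of_forall fun n => by have := log_natCast_nonneg n; positivity)]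
  · refine ((summable_nat_rpow_inv.2 hp).mul_left (log 2 ^ p)⁻¹).congr fun k => ?_
    rw [Nat.cast_pow, Nat.cast_ofNat, log_pow, mul_rpow (Nat.cast_nonneg k) hlog2.le, mul_inv,
      mul_inv, ← mul_assoc, mul_inv_cancel₀ (by positivity), one_mul, mul_comm]
  · filter_upwards [eventually_ge_atTop 2] with n hn
    have hn' : (2 : ℝ) ≤ n := by exact_mod_cast hn
    have : 0 < log n := log_pos (by linarith)
    push_cast
    gcongr <;> linarith

lemma stdGaussianCDF_neg_sqrt_two_mul_log_le {x : ℝ} (hx : exp 1 ≤ x) :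
    stdGaussianCDF (-√(2 * (log x + log (log x)))) ≤
      (√(2 * π))⁻¹ * (x * log x ^ (3 / 2 : ℝ))⁻¹ := by
  have hx0 : 0 < x := (exp_pos 1).trans_le hx
  set L := log x
  have hL : 1 ≤ L := (le_log_iff_exp_le hx0).2 hx
  have hlogL : 0 ≤ log L := log_nonneg hL
  set s := √(2 * (L + log L))
  have hs : 0 < s := sqrt_pos.2 (by linarith)
  have hexp : exp (-s ^ 2 / 2) = (x * L)⁻¹ := by
    rw [sq_sqrt (by linarith), show -(2 * (L + log L)) / 2 = -(L + log L) by ring, exp_neg,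
      exp_add, exp_log hx0, exp_log (by linarith)]
  have hsL : √L ≤ s := sqrt_le_sqrt (by linarith)
  calc stdGaussianCDF (-s) ≤ exp (-s ^ 2 / 2) / (s * √(2 * π)) := stdGaussianCDF_neg_le hs
    _ = (√(2 * π))⁻¹ * (x * L * s)⁻¹ := by rw [hexp]; field_simp
    _ ≤ (√(2 * π))⁻¹ * (x * L * √L)⁻¹ := by gcongr
    _ = (√(2 * π))⁻¹ * (x * L ^ (3 / 2 : ℝ))⁻¹ := by
      rw [show (3 / 2 : ℝ) = 1 + 1 / 2 by norm_num, rpow_add (by linarith), rpow_one,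
        ← sqrt_eq_rpow, mul_assoc]

lemma summable_stdGaussianCDF_neg_sqrt_two_mul_log :
    Summable fun k : ℕ =>
      stdGaussianCDF (-√(2 * (log ((k : ℝ) + 2) + log (log ((k : ℝ) + 2))))) := by
  have hbertrand := ((summable_nat_add_iff 2).2 (summable_inv_nat_mul_log_rpow
    (by norm_num : (1 : ℝ) < 3 / 2))).mul_left (√(2 * π))⁻¹
  refine .of_norm_bounded_eventually_nat hbertrand ?_
  filter_upwards [eventually_ge_atTop 1] with k hk
  have hk' : (1 : ℝ) ≤ k := by exact_mod_cast hk
  rw [norm_of_nonneg (stdGaussianCDF_nonneg _), Nat.cast_add, Nat.cast_two]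
  exact stdGaussianCDF_neg_sqrt_two_mul_log_le (by linarith [exp_one_lt_d9])

/-- For thresholds `T_{ε,k} = max(T_ε, √(2(log k + log log k)))` with
`T_ε → ∞` as `ε → 0⁺`, one has `∑_{k ≥ 2} Φ(−T_{ε,k}) → 0`. -/
theorem adaptive_threshold_level
    (T : ℝ → ℝ)
    (hT : Filter.Tendsto T (nhdsWithin 0 (Set.Ioi 0)) Filter.atTop) :
    Filter.Tendsto (fun ε => ∑' k : ℕ,
        stdGaussianCDF (-(max (T ε)
          (Real.sqrt (2 * (Real.log ((k : ℝ) + 2) + Real.log (Real.log ((k : ℝ) + 2))))))))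
      (nhdsWithin 0 (Set.Ioi 0)) (nhds 0) := by
  have hΦT : Tendsto (fun ε => stdGaussianCDF (-T ε)) (𝓝[>] 0) (𝓝 0) :=
    tendsto_stdGaussianCDF_atBot.comp (tendsto_neg_atTop_atBot.comp hT)
  simpa only [Pi.zero_apply, tsum_zero] using tendsto_tsum_of_dominated_convergence (g := 0)
    summable_stdGaussianCDF_neg_sqrt_two_mul_log
    (fun k => squeeze_zero (fun ε => stdGaussianCDF_nonneg _)
      (fun ε => monotone_stdGaussianCDF (neg_le_neg (le_max_left _ _))) hΦT)
    (.of_forall fun ε k => by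
      rw [norm_of_nonneg (stdGaussianCDF_nonneg _)]
      exact monotone_stdGaussianCDF (neg_le_neg (le_max_right _ _)))
end
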